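/- Let 0 < a_L < a_U and c ∈ ℝ, and define F : (0, ∞) → ℝ by F(n) = logit( Φ(a_U·√n − c) − Φ(a_L·√n − c) ). Then F′(n) → −a_L²/2 as n → ∞. -/

import Mathlib

open Real Filter MeasureTheory

/-- The standard normal density `φ(t) = (2π)^{-1/2} exp(-t²/2)`. -/
noncomputable def stdNormalPDF (t : ℝ) : ℝ :=
  (Real.sqrt (2 * Real.pi))⁻¹ * Real.exp (-(t ^ 2) / 2)

/-- The standard normal CDF `Φ(x) = ∫_{-∞}^x φ(t) dt`. -/
noncomputable def stdNormalCDF (x : ℝ) : ℝ :=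
  ∫ t in Set.Iic x, stdNormalPDF t

/-- `logit(x) = log(x) − log(1−x)`. -/
noncomputable def logit (x : ℝ) : ℝ :=
  Real.log x - Real.log (1 - x)

lemma pdf_eq (t : ℝ) : stdNormalPDF t = (Real.sqrt (2 * Real.pi))⁻¹ * Real.exp (-(1/2) * t ^ 2) := by
  rw [stdNormalPDF]; ring_nf

lemma pdf_pos (t : ℝ) : 0 < stdNormalPDF t := by
  have : 0 < Real.sqrt (2 * Real.pi) := Real.sqrt_pos.2 (by positivity)
  exact mul_pos (inv_pos.2 this) (Real.exp_pos _)

lemma pdf_cont : Continuous stdNormalPDF := by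
  unfold stdNormalPDF; fun_prop

lemma pdf_integrable : Integrable stdNormalPDF := by
  have := integrable_exp_neg_mul_sq (b := 1/2) (by norm_num)
  have h2 := this.const_mul (Real.sqrt (2 * Real.pi))⁻¹
  have : stdNormalPDF = fun t => (Real.sqrt (2 * Real.pi))⁻¹ * Real.exp (-(1/2) * t ^ 2) :=
    funext pdf_eq
  rw [this]; exact h2

lemma pdf_integral : ∫ t, stdNormalPDF t = 1 := by
  have h := integral_gaussian (1/2)
  have h2 : ∫ t : ℝ, stdNormalPDF t
      = (Real.sqrt (2 * Real.pi))⁻¹ * ∫ t : ℝ, Real.exp (-(1/2) * t ^ 2) := by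
    rw [← integral_const_mul]; congr 1; ext t; rw [pdf_eq]
  rw [h2, h]
  rw [show Real.pi / (1/2) = 2 * Real.pi by ring]
  rw [inv_mul_cancel₀ (Real.sqrt_pos.2 (by positivity)).ne']

lemma hasDerivAt_pdf (t : ℝ) : HasDerivAt stdNormalPDF (-t * stdNormalPDF t) t := by
  have h1 : HasDerivAt (fun t : ℝ => -(t ^ 2) / 2) (-t) t := by
    have := ((hasDerivAt_pow 2 t).neg).div_const 2
    simpa using this.congr_deriv (by ring)
  have h2 := (h1.exp).const_mul (Real.sqrt (2 * Real.pi))⁻¹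
  have h3 : HasDerivAt stdNormalPDF ((Real.sqrt (2 * Real.pi))⁻¹ * (Real.exp (-(t^2)/2) * -t)) t := h2
  convert h3 using 1
  rw [stdNormalPDF]; ring

lemma hasDerivAt_cdf (x : ℝ) : HasDerivAt stdNormalCDF (stdNormalPDF x) x := by
  have key : ∀ y : ℝ, stdNormalCDF y = stdNormalCDF 0 + ∫ t in (0:ℝ)..y, stdNormalPDF t := by
    intro y
    rw [← intervalIntegral.integral_Iic_sub_Iic (pdf_integrable.integrableOn)
      (pdf_integrable.integrableOn)]
    unfold stdNormalCDF; ring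
  have h : HasDerivAt (fun y => stdNormalCDF 0 + ∫ t in (0:ℝ)..y, stdNormalPDF t)
      (stdNormalPDF x) x := by
    have := (intervalIntegral.integral_hasDerivAt_right
      (pdf_integrable.intervalIntegrable)
      (pdf_cont.stronglyMeasurableAtFilter _ _)
      pdf_cont.continuousAt (a := 0) (b := x))
    exact this.const_add _
  have : stdNormalCDF = fun y => stdNormalCDF 0 + ∫ t in (0:ℝ)..y, stdNormalPDF t :=
    funext key
  rw [this]; exact h


lemma tpdf_integrable : Integrable (fun t : ℝ => t * stdNormalPDF t) := by
  have h := (integrable_mul_exp_neg_mul_sq (b := 1/2) (by norm_num)).const_mul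
    (Real.sqrt (2 * Real.pi))⁻¹
  apply h.congr
  apply Filter.Eventually.of_forall
  intro t
  show (Real.sqrt (2 * Real.pi))⁻¹ * (t * Real.exp (-(1/2) * t^2)) = t * stdNormalPDF t
  rw [pdf_eq]; ring

lemma pdf_tendsto_zero : Tendsto stdNormalPDF atTop (nhds 0) := by
  have h1 : Tendsto (fun t : ℝ => -(t^2)/2) atTop atBot := by
    apply Tendsto.atBot_div_const (by norm_num)
    exact tendsto_neg_atBot_iff.2 (tendsto_pow_atTop two_ne_zero)
  have h2 := (Real.tendsto_exp_atBot.comp h1).const_mul (Real.sqrt (2 * Real.pi))⁻¹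
  rw [mul_zero] at h2
  exact h2.congr fun t => by simp [Function.comp, stdNormalPDF]

lemma integral_Ioi_tpdf (x : ℝ) : ∫ t in Set.Ioi x, t * stdNormalPDF t = stdNormalPDF x := by
  have hderiv : ∀ t ∈ Set.Ici x, HasDerivAt (fun t => -stdNormalPDF t)
      (t * stdNormalPDF t) t := by
    intro t _
    have := (hasDerivAt_pdf t).neg
    exact this.congr_deriv (by ring)
  have hlim : Tendsto (fun t => -stdNormalPDF t) atTop (nhds 0) := by
    rw [show (0:ℝ) = -0 by ring]
    exact pdf_tendsto_zero.neg
  have := integral_Ioi_of_hasDerivAt_of_tendsto' hderiv tpdf_integrable.integrableOn hlim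
  rw [this]; ring

noncomputable def stdQ (x : ℝ) : ℝ := ∫ t in Set.Ioi x, stdNormalPDF t

lemma cdf_add_q (x : ℝ) : stdNormalCDF x + stdQ x = 1 := by
  rw [stdNormalCDF, stdQ, intervalIntegral.integral_Iic_add_Ioi pdf_integrable.integrableOn
    pdf_integrable.integrableOn, pdf_integral]

lemma q_pos (x : ℝ) : 0 < stdQ x := by
  rw [stdQ]
  apply (setIntegral_pos_iff_support_of_nonneg_ae _ _).2
  · have : Function.support stdNormalPDF = Set.univ := by
      ext t; simp [(pdf_pos t).ne']
    rw [this]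
    simpa using measure_Ioi_pos.2 (by simp)
  · exact Filter.Eventually.of_forall fun t => (pdf_pos t).le
  · exact pdf_integrable.integrableOn

lemma cdf_pos (x : ℝ) : 0 < stdNormalCDF x := by
  rw [stdNormalCDF]
  apply (setIntegral_pos_iff_support_of_nonneg_ae _ _).2
  · have : Function.support stdNormalPDF = Set.univ := by
      ext t; simp [(pdf_pos t).ne']
    rw [this]
    simpa using measure_Iic_pos.2 (by simp)
  · exact Filter.Eventually.of_forall fun t => (pdf_pos t).le
  · exact pdf_integrable.integrableOn

lemma cdf_lt_one (x : ℝ) : stdNormalCDF x < 1 := by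
  have := cdf_add_q x
  have := q_pos x
  linarith

-- Mills upper bound: for x > 0, Q x ≤ pdf x / x
lemma mills_upper {x : ℝ} (hx : 0 < x) : stdQ x ≤ stdNormalPDF x / x := by
  rw [stdQ]
  calc (∫ t in Set.Ioi x, stdNormalPDF t)
      ≤ ∫ t in Set.Ioi x, x⁻¹ * (t * stdNormalPDF t) := by
        apply setIntegral_mono_on pdf_integrable.integrableOn
          ((tpdf_integrable.const_mul x⁻¹).integrableOn) measurableSet_Ioi
        intro t ht
        have htx : x < t := ht
        have hp := pdf_pos t
        rw [inv_mul_eq_div, le_div_iff₀ hx]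
        nlinarith
    _ = stdNormalPDF x / x := by
        rw [integral_const_mul, integral_Ioi_tpdf]; ring

lemma hasDerivAt_mills_aux (t : ℝ) :
    HasDerivAt (fun t : ℝ => -(t / (t^2 + 1)) * stdNormalPDF t)
      ((1 - 2 / (t^2 + 1)^2) * stdNormalPDF t) t := by
  have hne : t^2 + 1 ≠ 0 := by positivity
  have h1 : HasDerivAt (fun t : ℝ => t / (t^2 + 1))
      ((1 * (t^2 + 1) - t * (2 * t)) / (t^2 + 1)^2) t := by
    apply HasDerivAt.div (hasDerivAt_id t) _ hne
    simpa using ((hasDerivAt_pow 2 t).add_const 1)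
  have h2 := (h1.neg).mul (hasDerivAt_pdf t)
  refine h2.congr_deriv ?_
  have hp := pdf_pos t
  simp only [Pi.neg_apply]
  field_simp
  ring
lemma mills_lower {x : ℝ} (hx : 0 < x) : x / (x^2 + 1) * stdNormalPDF x ≤ stdQ x := by
  have hg'int : IntegrableOn (fun t : ℝ => (1 - 2 / (t^2 + 1)^2) * stdNormalPDF t)
      (Set.Ioi x) := by
    apply Integrable.integrableOn
    apply Integrable.mono pdf_integrable
    · apply Continuous.aestronglyMeasurable
      apply Continuous.mul _ pdf_cont
      apply Continuous.sub continuous_const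
      apply Continuous.div continuous_const (by continuity)
      intro t; positivity
    · apply Filter.Eventually.of_forall
      intro t
      have hp := pdf_pos t
      have h1 : (0:ℝ) < (t^2+1)^2 := by positivity
      have h2 : (0:ℝ) ≤ 2 / (t^2+1)^2 := by positivity
      have h3 : (2:ℝ) / (t^2+1)^2 ≤ 2 := by
        rw [div_le_iff₀ h1]; nlinarith
      rw [Real.norm_eq_abs, Real.norm_eq_abs, abs_of_pos hp, abs_mul, abs_of_pos hp]
      have : |1 - 2 / (t^2 + 1)^2| ≤ 1 := abs_le.2 (by constructor <;> linarith)
      nlinarith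
  have hlim : Tendsto (fun t : ℝ => -(t / (t^2 + 1)) * stdNormalPDF t) atTop (nhds 0) := by
    rw [show (0:ℝ) = -0 * 0 by ring]
    apply Tendsto.mul _ pdf_tendsto_zero
    apply Tendsto.neg
    apply squeeze_zero_norm' _ tendsto_inv_atTop_zero
    filter_upwards [eventually_gt_atTop (0:ℝ)] with t ht
    rw [Real.norm_eq_abs, abs_of_nonneg (by positivity)]
    rw [div_le_iff₀ (by positivity), inv_mul_eq_div, le_div_iff₀ ht]
    nlinarith
  have key := integral_Ioi_of_hasDerivAt_of_tendsto'
    (fun t _ => hasDerivAt_mills_aux t) hg'int hlim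
  have hle : ∫ t in Set.Ioi x, (1 - 2 / (t^2 + 1)^2) * stdNormalPDF t
      ≤ ∫ t in Set.Ioi x, stdNormalPDF t := by
    apply setIntegral_mono_on hg'int pdf_integrable.integrableOn measurableSet_Ioi
    intro t _
    have hp := pdf_pos t
    have h2 : (0:ℝ) ≤ 2 / (t^2+1)^2 := by positivity
    nlinarith
  rw [key] at hle
  rw [stdQ]
  calc x / (x^2 + 1) * stdNormalPDF x = 0 - -(x / (x^2 + 1)) * stdNormalPDF x := by ring
    _ ≤ ∫ t in Set.Ioi x, stdNormalPDF t := hle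


lemma cdf_tendsto_one : Tendsto stdNormalCDF atTop (nhds 1) := by
  have key : ∀ y : ℝ, stdNormalCDF y = stdNormalCDF 0 + ∫ t in (0:ℝ)..y, stdNormalPDF t := by
    intro y
    rw [← intervalIntegral.integral_Iic_sub_Iic (pdf_integrable.integrableOn)
      (pdf_integrable.integrableOn)]
    unfold stdNormalCDF; ring
  have h := MeasureTheory.intervalIntegral_tendsto_integral_Ioi (0:ℝ)
    pdf_integrable.integrableOn tendsto_id
  have h2 := h.const_add (stdNormalCDF 0)
  have h3 : stdNormalCDF 0 + ∫ t in Set.Ioi (0:ℝ), stdNormalPDF t = 1 := cdf_add_q 0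
  rw [h3] at h2
  exact h2.congr fun y => (key y).symm

lemma hasDerivAt_logit {x : ℝ} (h0 : 0 < x) (h1 : x < 1) :
    HasDerivAt logit (1/x + 1/(1-x)) x := by
  have ha : HasDerivAt Real.log x⁻¹ x := Real.hasDerivAt_log h0.ne'
  have hb : HasDerivAt (fun y : ℝ => Real.log (1 - y)) ((1-x)⁻¹ * (-1)) x := by
    exact (Real.hasDerivAt_log (by linarith)).comp x ((hasDerivAt_id x).const_sub 1)
  have := ha.sub hb
  refine this.congr_deriv ?_
  field_simp
  ring

lemma sqrt_tendsto_atTop : Tendsto Real.sqrt atTop atTop := by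
  rw [tendsto_atTop_atTop]
  intro b
  refine ⟨(max b 0)^2, fun a ha => ?_⟩
  calc b ≤ max b 0 := le_max_left _ _
    _ = Real.sqrt ((max b 0)^2) := (Real.sqrt_sq (le_max_right _ _)).symm
    _ ≤ Real.sqrt a := Real.sqrt_le_sqrt ha

lemma aux_lin_atTop {a : ℝ} (c : ℝ) (ha : 0 < a) :
    Tendsto (fun s : ℝ => a * s - c) atTop atTop := by
  apply tendsto_atTop_add_const_right
  exact (tendsto_id.const_mul_atTop ha)

lemma aux1 {a : ℝ} (c : ℝ) (ha : 0 < a) :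
    Tendsto (fun s : ℝ => s / (a * s - c)) atTop (nhds (1/a)) := by
  have h0 : Tendsto (fun s : ℝ => c * s⁻¹) atTop (nhds 0) := by
    simpa using (tendsto_inv_atTop_zero.const_mul c)
  have h1 : Tendsto (fun s : ℝ => (a - c * s⁻¹)⁻¹) atTop (nhds a⁻¹) := by
    have := (tendsto_const_nhds.sub h0).inv₀ (by simpa using ha.ne')
    simpa using this
  rw [one_div]
  apply h1.congr'
  filter_upwards [eventually_gt_atTop (0:ℝ), (aux_lin_atTop c ha).eventually_gt_atTop 0]
    with s hs hl
  have h2 : a - c * s⁻¹ ≠ 0 := by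
    have : a - c * s⁻¹ = (a * s - c) / s := by field_simp
    rw [this]
    positivity
  field_simp

lemma aux2 {a : ℝ} (c : ℝ) (ha : 0 < a) :
    Tendsto (fun s : ℝ => s * ((a * s - c) / ((a * s - c)^2 + 1))) atTop (nhds (1/a)) := by
  have h0 : Tendsto (fun s : ℝ => c * s⁻¹) atTop (nhds 0) := by
    simpa using (tendsto_inv_atTop_zero.const_mul c)
  have hnum : Tendsto (fun s : ℝ => a - c * s⁻¹) atTop (nhds a) := by
    have := Tendsto.sub (tendsto_const_nhds : Tendsto (fun _ : ℝ => a) atTop (nhds a)) h0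
    simpa using this
  have hden : Tendsto (fun s : ℝ => (a - c * s⁻¹)^2 + (s⁻¹)^2) atTop (nhds (a^2)) := by
    have h2 : Tendsto (fun s : ℝ => (s⁻¹)^2) atTop (nhds 0) := by
      have := (tendsto_inv_atTop_zero (𝕜 := ℝ)).pow 2
      simpa using this
    have := (hnum.pow 2).add h2
    simpa using this
  have h1 := hnum.div hden (by positivity)
  have hval : a / a^2 = 1/a := by field_simp [pow_two]
  rw [← hval]
  apply h1.congr'
  filter_upwards [eventually_gt_atTop (0:ℝ)] with s hs
  have h3 : (a * s - c)^2 + 1 > 0 := by positivity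
  have h4 : (a - c * s⁻¹)^2 + (s⁻¹)^2 > 0 := by positivity
  simp only [Pi.div_apply]
  field_simp

lemma pdf_div (a b : ℝ) :
    stdNormalPDF a / stdNormalPDF b = Real.exp ((b^2 - a^2)/2) := by
  rw [stdNormalPDF, stdNormalPDF, mul_div_mul_left _ _
    (by positivity : (Real.sqrt (2 * Real.pi))⁻¹ ≠ 0), ← Real.exp_sub]
  congr 1
  ring

lemma aux_exp {aL aU : ℝ} (c : ℝ) (haL : 0 < aL) (haU : aL < aU) :
    Tendsto (fun s : ℝ => Real.exp (((aL * s - c)^2 - (aU * s - c)^2)/2)) atTop (nhds 0) := by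
  have hg : Tendsto (fun s : ℝ => (aL^2 - aU^2)/2 + c * (aU - aL) * s⁻¹) atTop
      (nhds ((aL^2 - aU^2)/2)) := by
    have := Tendsto.add
      (tendsto_const_nhds : Tendsto (fun _ : ℝ => (aL^2 - aU^2)/2) atTop (nhds ((aL^2 - aU^2)/2)))
      ((tendsto_inv_atTop_zero (𝕜 := ℝ)).const_mul (c * (aU - aL)))
    simpa using this
  have hneg : (aL^2 - aU^2)/2 < 0 := by nlinarith
  have hmul : Tendsto (fun s : ℝ => s^2 * ((aL^2 - aU^2)/2 + c * (aU - aL) * s⁻¹)) atTop atBot :=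
    Filter.Tendsto.atTop_mul_neg hneg (tendsto_pow_atTop two_ne_zero) hg
  have := Real.tendsto_exp_atBot.comp hmul
  apply this.congr'
  filter_upwards [eventually_gt_atTop (0:ℝ)] with s hs
  simp only [Function.comp]
  congr 1
  field_simp
  ring

lemma ratio_eq (s qL qU dL dU A B : ℝ) (hs : 0 < s) (hdL : 0 < dL) (hq : qL - qU ≠ 0) :
    (A * (dU / dL) - B) / (2 * (s * (qL / dL) - s * (qU / dL)))
      = 1 / (qL - qU) * (dU * (A * (1 / (2 * s))) - dL * (B * (1 / (2 * s)))) := by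
  have h1 : 2 * (s * (qL / dL) - s * (qU / dL)) = 2 * s * (qL - qU) / dL := by
    field_simp
  rw [h1, div_div_eq_mul_div,
    div_eq_iff (mul_ne_zero (mul_ne_zero two_ne_zero hs.ne') hq)]
  field_simp

/-- Let `0 < a_L < a_U` and `c ∈ ℝ`, and let
`F(n) = logit(Φ(a_U·√n − c) − Φ(a_L·√n − c))`.
Then `F′(n) → −a_L²/2` as `n → ∞`. -/
theorem tendsto_deriv_logit_interval_right (aL aU c : ℝ) (haL : 0 < aL) (haU : aL < aU) :
    Tendsto
      (deriv fun n : ℝ =>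
        logit (stdNormalCDF (aU * Real.sqrt n - c) - stdNormalCDF (aL * Real.sqrt n - c)))
      atTop (nhds (-(aL ^ 2) / 2)) := by
  set l : ℝ → ℝ := fun n => aL * Real.sqrt n - c with hl_def
  set u : ℝ → ℝ := fun n => aU * Real.sqrt n - c with hu_def
  set p : ℝ → ℝ := fun n => stdNormalCDF (u n) - stdNormalCDF (l n) with hp_def
  set p' : ℝ → ℝ := fun n => stdNormalPDF (u n) * (aU * (1 / (2 * Real.sqrt n)))
    - stdNormalPDF (l n) * (aL * (1 / (2 * Real.sqrt n))) with hp'_def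
  have htl : Tendsto l atTop atTop := (aux_lin_atTop c haL).comp sqrt_tendsto_atTop
  have htu : Tendsto u atTop atTop := (aux_lin_atTop c (haL.trans haU)).comp sqrt_tendsto_atTop
  -- eventual basic facts
  have hev : ∀ᶠ n in atTop, 0 < n ∧ 0 < l n ∧ l n < u n ∧ 0 < p n ∧ p n < 1 := by
    filter_upwards [eventually_gt_atTop (0:ℝ), htl.eventually_gt_atTop 0] with n hn hln
    have hsn : 0 < Real.sqrt n := Real.sqrt_pos.2 hn
    have hlu : l n < u n := by
      simp only [hl_def, hu_def]
      have := mul_lt_mul_of_pos_right haU hsn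
      linarith
    have hppos : 0 < p n := by
      have hform : p n = ∫ t in (l n)..(u n), stdNormalPDF t := by
        simp only [hp_def]
        unfold stdNormalCDF
        rw [intervalIntegral.integral_Iic_sub_Iic pdf_integrable.integrableOn
          pdf_integrable.integrableOn]
      rw [hform]
      exact intervalIntegral.intervalIntegral_pos_of_pos_on
        (pdf_integrable.intervalIntegrable) (fun t _ => pdf_pos t) hlu
    have hplt : p n < 1 := by
      have h1 := cdf_lt_one (u n)
      have h2 := cdf_pos (l n)
      simp only [hp_def]
      linarith
    exact ⟨hn, hln, hlu, hppos, hplt⟩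
  -- derivative identity
  have hderiv_eq : ∀ᶠ n in atTop,
      deriv (fun n : ℝ =>
        logit (stdNormalCDF (aU * Real.sqrt n - c) - stdNormalCDF (aL * Real.sqrt n - c))) n
      = (1 / p n + 1 / (1 - p n)) * p' n := by
    filter_upwards [hev] with n hn
    obtain ⟨hn0, hln, hlu, hp0, hp1⟩ := hn
    have hs : HasDerivAt Real.sqrt (1 / (2 * Real.sqrt n)) n := Real.hasDerivAt_sqrt hn0.ne'
    have hu' : HasDerivAt (fun n : ℝ => aU * Real.sqrt n - c)
        (aU * (1 / (2 * Real.sqrt n))) n := (hs.const_mul aU).sub_const c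
    have hl' : HasDerivAt (fun n : ℝ => aL * Real.sqrt n - c)
        (aL * (1 / (2 * Real.sqrt n))) n := (hs.const_mul aL).sub_const c
    have hcu := (hasDerivAt_cdf (u n)).comp n hu'
    have hcl := (hasDerivAt_cdf (l n)).comp n hl'
    have hp' : HasDerivAt (fun n : ℝ =>
        stdNormalCDF (aU * Real.sqrt n - c) - stdNormalCDF (aL * Real.sqrt n - c)) (p' n) n := by
      exact hcu.sub hcl
    have hlog := (hasDerivAt_logit hp0 hp1).comp n hp'
    exact hlog.deriv
  -- limits
  -- component limits
  have hsn0 : Tendsto (fun n : ℝ => 1 / (2 * Real.sqrt n)) atTop (nhds 0) := by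
    have h := (sqrt_tendsto_atTop.const_mul_atTop two_pos).inv_tendsto_atTop
    exact h.congr fun n => (one_div _).symm
  have hp0T : Tendsto p atTop (nhds 0) := by
    have h := (cdf_tendsto_one.comp htu).sub (cdf_tendsto_one.comp htl)
    rw [sub_self] at h
    exact h
  have h1p : Tendsto (fun n : ℝ => 1 / (1 - p n)) atTop (nhds 1) := by
    have h := (Tendsto.sub (tendsto_const_nhds : Tendsto (fun _ : ℝ => (1:ℝ)) atTop (nhds 1))
      hp0T).inv₀ (by norm_num)
    rw [show ((1:ℝ) - 0)⁻¹ = 1 by norm_num] at h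
    exact h.congr fun n => (one_div _).symm
  have hp'0 : Tendsto p' atTop (nhds 0) := by
    have h1 : Tendsto (fun n : ℝ => stdNormalPDF (u n) * (aU * (1 / (2 * Real.sqrt n))))
        atTop (nhds (0 * (aU * 0))) :=
      (pdf_tendsto_zero.comp htu).mul (hsn0.const_mul aU)
    have h2 : Tendsto (fun n : ℝ => stdNormalPDF (l n) * (aL * (1 / (2 * Real.sqrt n))))
        atTop (nhds (0 * (aL * 0))) :=
      (pdf_tendsto_zero.comp htl).mul (hsn0.const_mul aL)
    have h := h1.sub h2
    rw [show (0:ℝ) * (aU * 0) - 0 * (aL * 0) = 0 by ring] at h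
    exact h
  have hr : Tendsto (fun n : ℝ => stdNormalPDF (u n) / stdNormalPDF (l n)) atTop (nhds 0) := by
    have h := (aux_exp c haL haU).comp sqrt_tendsto_atTop
    apply h.congr
    intro n
    exact (pdf_div (u n) (l n)).symm
  have hN : Tendsto (fun n : ℝ => aU * (stdNormalPDF (u n) / stdNormalPDF (l n)) - aL)
      atTop (nhds (-aL)) := by
    have h := (hr.const_mul aU).sub_const aL
    rw [show aU * 0 - aL = -aL by ring] at h
    exact h
  have hA : Tendsto (fun n : ℝ => Real.sqrt n * (stdQ (l n) / stdNormalPDF (l n)))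
      atTop (nhds (1/aL)) := by
    have hlow := (aux2 c haL).comp sqrt_tendsto_atTop
    have hup := (aux1 c haL).comp sqrt_tendsto_atTop
    apply tendsto_of_tendsto_of_tendsto_of_le_of_le' hlow hup
    · filter_upwards [hev] with n hn
      obtain ⟨hn0, hln, _, _, _⟩ := hn
      show Real.sqrt n * ((l n) / ((l n)^2 + 1)) ≤ _
      apply mul_le_mul_of_nonneg_left _ (Real.sqrt_nonneg n)
      rw [le_div_iff₀ (pdf_pos (l n))]
      exact mills_lower hln
    · filter_upwards [hev] with n hn
      obtain ⟨hn0, hln, _, _, _⟩ := hn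
      show _ ≤ Real.sqrt n / (l n)
      have h1 : stdQ (l n) / stdNormalPDF (l n) ≤ 1 / l n := by
        rw [div_le_div_iff₀ (pdf_pos (l n)) hln]
        have h2 := (le_div_iff₀ hln).1 (mills_upper hln)
        linarith
      calc Real.sqrt n * (stdQ (l n) / stdNormalPDF (l n))
          ≤ Real.sqrt n * (1 / l n) :=
            mul_le_mul_of_nonneg_left h1 (Real.sqrt_nonneg n)
        _ = Real.sqrt n / l n := by ring
  have hB : Tendsto (fun n : ℝ => Real.sqrt n * (stdQ (u n) / stdNormalPDF (l n)))
      atTop (nhds 0) := by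
    have hupB : Tendsto (fun n : ℝ =>
        (Real.sqrt n / (u n)) * (stdNormalPDF (u n) / stdNormalPDF (l n))) atTop (nhds 0) := by
      have h := ((aux1 c (haL.trans haU)).comp sqrt_tendsto_atTop).mul hr
      rw [mul_zero] at h
      exact h
    apply tendsto_of_tendsto_of_tendsto_of_le_of_le' tendsto_const_nhds hupB
    · filter_upwards with n
      exact mul_nonneg (Real.sqrt_nonneg n)
        (div_nonneg (q_pos (u n)).le (pdf_pos (l n)).le)
    · filter_upwards [hev] with n hn
      obtain ⟨hn0, hln, hlu, _, _⟩ := hn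
      have hun : 0 < u n := hln.trans hlu
      calc Real.sqrt n * (stdQ (u n) / stdNormalPDF (l n))
          ≤ Real.sqrt n * ((stdNormalPDF (u n) / u n) / stdNormalPDF (l n)) := by
            apply mul_le_mul_of_nonneg_left _ (Real.sqrt_nonneg n)
            exact (div_le_div_iff_of_pos_right (pdf_pos (l n))).2 (mills_upper hun)
        _ = (Real.sqrt n / (u n)) * (stdNormalPDF (u n) / stdNormalPDF (l n)) := by ring
  have hDd : Tendsto (fun n : ℝ => 2 * (Real.sqrt n * (stdQ (l n) / stdNormalPDF (l n))
      - Real.sqrt n * (stdQ (u n) / stdNormalPDF (l n)))) atTop (nhds (2 * (1/aL - 0))) :=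
    (hA.sub hB).const_mul 2
  have hDdne : (2 : ℝ) * (1/aL - 0) ≠ 0 := by
    rw [show (2:ℝ) * (1/aL - 0) = 2/aL by ring]
    positivity
  have hT := hN.div hDd hDdne
  have hval : -aL / (2 * (1/aL - 0)) = -(aL^2)/2 := by
    field_simp
    ring
  rw [hval] at hT
  have hterm1 : Tendsto (fun n : ℝ => 1 / p n * p' n) atTop (nhds (-(aL^2)/2)) := by
    apply hT.congr'
    filter_upwards [hev] with n hn
    obtain ⟨hn0, hln, hlu, hpp, hp1⟩ := hn
    have hsn : 0 < Real.sqrt n := Real.sqrt_pos.2 hn0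
    have hpe : p n = stdQ (l n) - stdQ (u n) := by
      have h1 := cdf_add_q (u n)
      have h2 := cdf_add_q (l n)
      simp only [hp_def]
      linarith
    have hQ : stdQ (l n) - stdQ (u n) ≠ 0 := by rw [← hpe]; exact hpp.ne'
    have hpl := pdf_pos (l n)
    simp only [hp'_def]
    rw [hpe]
    exact ratio_eq (Real.sqrt n) (stdQ (l n)) (stdQ (u n)) (stdNormalPDF (l n))
      (stdNormalPDF (u n)) aU aL hsn hpl hQ
  have hterm2 : Tendsto (fun n : ℝ => 1 / (1 - p n) * p' n) atTop (nhds (1 * 0)) :=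
    h1p.mul hp'0
  have hsum := hterm1.add hterm2
  rw [show -(aL^2)/2 + 1 * 0 = -(aL^2)/2 by ring] at hsum
  have hD : Tendsto (fun n : ℝ => (1 / p n + 1 / (1 - p n)) * p' n) atTop
      (nhds (-(aL^2)/2)) := by
    apply hsum.congr
    intro n
    ring
  exact Tendsto.congr' (Filter.EventuallyEq.symm hderiv_eq) hD
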